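/- arXiv:1312.6503 — 5 statements merged into one kernel-verified Lean document; each statement's English description precedes it below -/
import Mathlib

section
/- If a graph G admits a Grundy partial k-coloring (i.e., a Grundy k-coloring of some induced subgraph of G), then the Grundy number of G is at least k. -/
variable {V : Type*}

/-- `c` is a Grundy coloring of `G`: a proper coloring with positive integer
colors in which every vertex of color `i` has, for each `1 ≤ j < i`, a neighbor
of color `j`. -/
def IsGrundyColoring (G : SimpleGraph V) (c : V → ℕ) : Prop :=
  (∀ v, 1 ≤ c v) ∧
  (∀ v w, G.Adj v w → c v ≠ c w) ∧
  (∀ v j, 1 ≤ j → j < c v → ∃ u, G.Adj v u ∧ c u = j)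

/-- `c` is a Grundy `k`-coloring of `G`: a Grundy coloring using exactly the
colors `1, …, k` (surjectively). -/
def IsGrundyKColoring (G : SimpleGraph V) (c : V → ℕ) (k : ℕ) : Prop :=
  IsGrundyColoring G c ∧ (∀ v, c v ≤ k) ∧ (∀ j, 1 ≤ j → j ≤ k → ∃ v, c v = j)

/-- `G` admits a Grundy `k`-coloring. -/
def GrundyColorable (G : SimpleGraph V) (k : ℕ) : Prop :=
  ∃ c : V → ℕ, IsGrundyKColoring G c k

/-- The Grundy number of `G`: the largest `k` such that `G` admits a Grundy
`k`-coloring. -/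
noncomputable def grundy (G : SimpleGraph V) : ℕ :=
  sSup {k | GrundyColorable G k}

/-- `X` is an independent module of `G`: an independent set of vertices all
having the same neighborhood. -/
def IndepModule (G : SimpleGraph V) (X : Set V) : Prop :=
  (∀ x ∈ X, ∀ y ∈ X, ¬ G.Adj x y) ∧
  (∀ x ∈ X, ∀ y ∈ X, ∀ z, G.Adj x z ↔ G.Adj y z)

/-- The neighborhood of `v` in `G` can be partitioned into `n` independent
modules of `G`. -/
def NbhdPartition (G : SimpleGraph V) (v : V) (n : ℕ) : Prop :=
  ∃ M : Fin n → Set V, (∀ i, IndepModule G (M i)) ∧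
    (∀ i j, i ≠ j → Disjoint (M i) (M j)) ∧
    (⋃ i, M i) = G.neighborSet v

/-- `G` contains an induced 4-cycle. -/
def HasInducedC4 (G : SimpleGraph V) : Prop :=
  ∃ a b c d : V, a ≠ b ∧ a ≠ c ∧ a ≠ d ∧ b ≠ c ∧ b ≠ d ∧ c ≠ d ∧
    G.Adj a b ∧ G.Adj b c ∧ G.Adj c d ∧ G.Adj d a ∧ ¬ G.Adj a c ∧ ¬ G.Adj b d

/-- `G` admits a partial Grundy `k`-coloring: a surjective proper coloring with
colors `1, …, k` such that every color class `j` contains a vertex having, for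
each `1 ≤ i < j`, a neighbor of color `i`. -/
def PartialGrundyColorable (G : SimpleGraph V) (k : ℕ) : Prop :=
  ∃ c : V → ℕ, (∀ v, 1 ≤ c v ∧ c v ≤ k) ∧
    (∀ v w, G.Adj v w → c v ≠ c w) ∧
    (∀ j, 1 ≤ j → j ≤ k →
      ∃ v, c v = j ∧ ∀ i, 1 ≤ i → i < j → ∃ u, G.Adj v u ∧ c u = i)

/-- The partial Grundy number of `G`. -/
noncomputable def partialGrundy (G : SimpleGraph V) : ℕ :=
  sSup {k | PartialGrundyColorable G k}

/-!
Color the vertices outside `S` one at a time, each with the least positive color missing from its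
already colored neighbors. This first-fit step keeps the coloring a Grundy coloring of the colored
part, and it never recolors a vertex, so the colors `1, …, k` used on `S` stay in use; once every
vertex is colored we have a Grundy coloring of `G` with at least `k` colors.
-/

/-- A Grundy `k`-coloring of `G.induce S`, recorded as a coloring of all of `V` whose values off
`S` are irrelevant. -/
def IsGrundyKColoringOn (G : SimpleGraph V) (S : Set V) (c : V → ℕ) (k : ℕ) : Prop :=
  (∀ v ∈ S, 1 ≤ c v ∧ c v ≤ k) ∧
  (∀ v ∈ S, ∀ w ∈ S, G.Adj v w → c v ≠ c w) ∧
  (∀ v ∈ S, ∀ j, 1 ≤ j → j < c v → ∃ u ∈ S, G.Adj v u ∧ c u = j) ∧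
  (∀ j, 1 ≤ j → j ≤ k → ∃ v ∈ S, c v = j)

section

variable {G : SimpleGraph V} {S : Set V} {c : V → ℕ} {k : ℕ}

theorem GrundyColorable.exists_isGrundyKColoringOn (h : GrundyColorable (G.induce S) k) :
    ∃ c, IsGrundyKColoringOn G S c k := by
  obtain ⟨c, ⟨hpos, hproper, hgrundy⟩, hle, hsurj⟩ := h
  have hext (v : V) (hv : v ∈ S) : Function.extend Subtype.val c 0 v = c ⟨v, hv⟩ :=
    Subtype.val_injective.extend_apply c 0 ⟨v, hv⟩
  refine ⟨Function.extend Subtype.val c 0, ?_, ?_, ?_, ?_⟩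
  · intro v hv
    rw [hext v hv]
    exact ⟨hpos _, hle _⟩
  · intro v hv w hw hvw
    rw [hext v hv, hext w hw]
    exact hproper ⟨v, hv⟩ ⟨w, hw⟩ hvw
  · intro v hv j hj hjv
    rw [hext v hv] at hjv
    obtain ⟨⟨u, hu⟩, hvu, rfl⟩ := hgrundy ⟨v, hv⟩ j hj hjv
    exact ⟨u, hu, hvu, hext u hu⟩
  · intro j hj hjk
    obtain ⟨⟨v, hv⟩, rfl⟩ := hsurj j hj hjk
    exact ⟨v, hv, hext v hv⟩

theorem IsGrundyKColoringOn.isGrundyKColoring (h : IsGrundyKColoringOn G Set.univ c k) :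
    IsGrundyKColoring G c k := by
  obtain ⟨hbound, hproper, hgrundy, hsurj⟩ := h
  refine ⟨⟨fun v => (hbound v trivial).1, fun v w => hproper v trivial w trivial, ?_⟩,
    fun v => (hbound v trivial).2, ?_⟩
  · intro v j hj hjv
    obtain ⟨u, -, hvu, hu⟩ := hgrundy v trivial j hj hjv
    exact ⟨u, hvu, hu⟩
  · intro j hj hjk
    obtain ⟨v, -, hv⟩ := hsurj j hj hjk
    exact ⟨v, hv⟩

theorem exists_firstFit_color (G : SimpleGraph V) (hbound : ∀ u ∈ S, c u ≤ k) (v : V) :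
    ∃ m, 1 ≤ m ∧ m ≤ k + 1 ∧ (∀ u ∈ S, G.Adj v u → c u ≠ m) ∧
      ∀ j, 1 ≤ j → j < m → ∃ u ∈ S, G.Adj v u ∧ c u = j := by
  classical
  have hfree : ∀ u ∈ S, G.Adj v u → c u ≠ k + 1 := fun u hu _ => by
    have := hbound u hu
    omega
  have hex : ∃ m, 1 ≤ m ∧ ∀ u ∈ S, G.Adj v u → c u ≠ m := ⟨k + 1, by omega, hfree⟩
  obtain ⟨hm, hmfree⟩ := Nat.find_spec hex
  refine ⟨Nat.find hex, hm, Nat.find_le ⟨by omega, hfree⟩, hmfree, fun j hj hjm => ?_⟩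
  simpa [hj] using Nat.find_min hex hjm

theorem IsGrundyKColoringOn.update [DecidableEq V] (h : IsGrundyKColoringOn G S c k) {v : V}
    (hv : v ∉ S) {m : ℕ} (hm : 1 ≤ m) (hmk : m ≤ k + 1)
    (hfree : ∀ u ∈ S, G.Adj v u → c u ≠ m)
    (hmin : ∀ j, 1 ≤ j → j < m → ∃ u ∈ S, G.Adj v u ∧ c u = j) :
    IsGrundyKColoringOn G (insert v S) (Function.update c v m) (max k m) := by
  obtain ⟨hbound, hproper, hgrundy, hsurj⟩ := h
  have hS : ∀ u ∈ S, Function.update c v m u = c u :=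
    fun u hu => Function.update_of_ne (ne_of_mem_of_not_mem hu hv) _ _
  have hlift : ∀ w j, (∃ u ∈ S, G.Adj w u ∧ c u = j) →
      ∃ u ∈ insert v S, G.Adj w u ∧ Function.update c v m u = j := by
    rintro w j ⟨u, hu, hwu, rfl⟩
    exact ⟨u, Set.mem_insert_of_mem v hu, hwu, hS u hu⟩
  refine ⟨?_, ?_, ?_, ?_⟩
  · rintro w (rfl | hw)
    · simp only [Function.update_self]
      omega
    · rw [hS w hw]
      exact ⟨(hbound w hw).1, (hbound w hw).2.trans (le_max_left k m)⟩
  · rintro x (rfl | hx) w (rfl | hw) hxw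
    · exact (G.irrefl hxw).elim
    · rw [Function.update_self, hS w hw]
      exact (hfree w hw hxw).symm
    · rw [Function.update_self, hS x hx]
      exact hfree x hx hxw.symm
    · rw [hS x hx, hS w hw]
      exact hproper x hx w hw hxw
  · rintro x (rfl | hx) j hj hjx
    · rw [Function.update_self] at hjx
      exact hlift x j (hmin j hj hjx)
    · rw [hS x hx] at hjx
      exact hlift x j (hgrundy x hx j hj hjx)
  · intro j hj hjk
    rcases le_or_gt j k with hjk' | hjk'
    · obtain ⟨w, hw, rfl⟩ := hsurj j hj hjk'
      exact ⟨w, Set.mem_insert_of_mem v hw, hS w hw⟩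
    · exact ⟨v, Set.mem_insert v S, by rw [Function.update_self]; omega⟩

theorem IsGrundyKColoringOn.exists_insert (h : IsGrundyKColoringOn G S c k) (v : V) :
    ∃ c' k', k ≤ k' ∧ IsGrundyKColoringOn G (insert v S) c' k' := by
  classical
  by_cases hv : v ∈ S
  · exact ⟨c, k, le_rfl, by rwa [Set.insert_eq_of_mem hv]⟩
  obtain ⟨m, hm, hmk, hfree, hmin⟩ := exists_firstFit_color G (fun u hu => (h.1 u hu).2) v
  exact ⟨_, _, le_max_left k m, h.update hv hm hmk hfree hmin⟩

theorem IsGrundyKColoringOn.exists_grundyColorable_ge [Finite V]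
    (h : IsGrundyKColoringOn G S c k) : ∃ k', k ≤ k' ∧ GrundyColorable G k' := by
  classical
  have : Fintype V := Fintype.ofFinite V
  have hgrow : ∀ T : Finset V, ∃ c' k', k ≤ k' ∧ IsGrundyKColoringOn G (S ∪ T) c' k' := by
    intro T
    induction T using Finset.induction_on with
    | empty => exact ⟨c, k, le_rfl, by simpa using h⟩
    | insert v T _ ih =>
      obtain ⟨c', k', hk', h'⟩ := ih
      obtain ⟨c'', k'', hk'', h''⟩ := h'.exists_insert v
      refine ⟨c'', k'', hk'.trans hk'', ?_⟩
      rwa [Finset.coe_insert, Set.union_insert]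
  obtain ⟨c', k', hk', h'⟩ := hgrow Finset.univ
  rw [Finset.coe_univ, Set.union_univ] at h'
  exact ⟨k', hk', c', h'.isGrundyKColoring⟩

theorem GrundyColorable.le_card [Finite V] (h : GrundyColorable G k) : k ≤ Nat.card V := by
  obtain ⟨c, -, -, hsurj⟩ := h
  choose f hf using fun j : Fin k => hsurj (j + 1) (by omega) (by omega)
  have hinj : Function.Injective f := fun a b hab => by
    have := (hf a).symm.trans (hab ▸ hf b)
    omega
  simpa using Nat.card_le_card_of_injective f hinj

theorem GrundyColorable.le_grundy [Finite V] (h : GrundyColorable G k) : k ≤ grundy G :=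
  le_csSup ⟨Nat.card V, fun _ hj => GrundyColorable.le_card hj⟩ h

end

theorem grundy_partial_coloring_le {V : Type*} [Fintype V] (G : SimpleGraph V)
    (k : ℕ) (S : Set V) (h : GrundyColorable (G.induce S) k) :
    k ≤ grundy G := by
  obtain ⟨c, hc⟩ := h.exists_isGrundyKColoringOn
  obtain ⟨k', hk', hG⟩ := hc.exists_grundyColorable_ge
  exact hk'.trans hG.le_grundy
end

section
/- Let G be a graph and v a vertex whose neighborhood N(v) can be partitioned into at most ℓ−1 independent modules of G. Then in every Grundy coloring of G, the color of v is at most ℓ. -/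
variable {V : Type*}

/-!
Vertices with the same neighborhood receive the same color in a Grundy coloring: if `c x < c y`,
then `y` has a neighbor of color `c x`, which is also a neighbor of `x`. Hence the neighbors of `v`
see at most `n` colors when `N(v)` is covered by `n` modules, while the Grundy condition makes them
see all of `1, …, c v - 1`.
-/

namespace IsGrundyColoring

variable {G : SimpleGraph V} {c : V → ℕ}

lemma le_of_neighborSet_subset (hc : IsGrundyColoring G c) {x y : V}
    (hxy : G.neighborSet y ⊆ G.neighborSet x) : c y ≤ c x := by
  obtain ⟨hpos, hproper, hgrundy⟩ := hc
  by_contra! hlt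
  obtain ⟨w, hyw, hw⟩ := hgrundy y (c x) (hpos x) hlt
  exact hproper x w (hxy hyw) hw.symm

lemma image_subsingleton_of_indepModule (hc : IsGrundyColoring G c) {X : Set V}
    (hX : IndepModule G X) : (c '' X).Subsingleton := by
  rintro _ ⟨x, hx, rfl⟩ _ ⟨y, hy, rfl⟩
  exact le_antisymm (hc.le_of_neighborSet_subset fun z => (hX.2 x hx y hy z).mp)
    (hc.le_of_neighborSet_subset fun z => (hX.2 x hx y hy z).mpr)

lemma Ico_subset_image_neighborSet (hc : IsGrundyColoring G c) (v : V) :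
    Set.Ico 1 (c v) ⊆ c '' G.neighborSet v := by
  rintro j ⟨hj, hjv⟩
  obtain ⟨u, hvu, rfl⟩ := hc.2.2 v j hj hjv
  exact ⟨u, hvu, rfl⟩

lemma encard_image_neighborSet_le (hc : IsGrundyColoring G c) {v : V} {n : ℕ}
    (hv : NbhdPartition G v n) : (c '' G.neighborSet v).encard ≤ n := by
  obtain ⟨M, hM, -, hcover⟩ := hv
  calc (c '' G.neighborSet v).encard
      = (⋃ i ∈ (Finset.univ : Finset (Fin n)), c '' M i).encard := by
        simp [← hcover, Set.image_iUnion]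
    _ ≤ ∑ i : Fin n, (c '' M i).encard := Finset.set_encard_biUnion_le _ _
    _ ≤ ∑ _i : Fin n, 1 := Finset.sum_le_sum fun i _ =>
        Set.encard_le_one_iff_subsingleton.mpr (hc.image_subsingleton_of_indepModule (hM i))
    _ = n := by simp

lemma le_succ_of_nbhdPartition (hc : IsGrundyColoring G c) {v : V} {n : ℕ}
    (hv : NbhdPartition G v n) : c v ≤ n + 1 := by
  have hcard : ((c v - 1 : ℕ) : ℕ∞) ≤ n := calc
    ((c v - 1 : ℕ) : ℕ∞) = (Set.Ico 1 (c v)).encard := by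
      rw [← Set.ncard_Ico_nat, Set.Finite.cast_ncard_eq (Set.finite_Ico 1 (c v))]
    _ ≤ (c '' G.neighborSet v).encard := Set.encard_le_encard (hc.Ico_subset_image_neighborSet v)
    _ ≤ n := hc.encard_image_neighborSet_le hv
  have := ENat.natCast_le_natCast.mp hcard
  omega

end IsGrundyColoring

theorem one_ell_twin_color_le {V : Type*} (G : SimpleGraph V) (ℓ : ℕ) (v : V)
    (hpart : ∃ n, n < ℓ ∧ NbhdPartition G v n)
    (c : V → ℕ) (hc : IsGrundyColoring G c) :
    c v ≤ ℓ := by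
  obtain ⟨n, hnℓ, hv⟩ := hpart
  have := hc.le_succ_of_nbhdPartition hv
  omega
end

section
/- Let G be a 4-regular graph without induced C_4 that contains K_4 as a subgraph. Then Γ(G) = 5. -/
variable {V : Type*}

/-!
A vertex of color `k` in a Grundy coloring sees `k - 1` distinct colors among its neighbors, so
`Γ(G) ≤ Δ(G) + 1 = 5`. For the lower bound, each vertex of the `K₄` has exactly one neighbor
outside it, and two distinct such private neighbors cannot be adjacent, as they would close an
induced `C₄` with their clique vertices. Coloring the private neighbors `1` and the clique
`2, 3, 4, 5` is a Grundy coloring of the subgraph they induce, and first-fit extends it to all of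
`G`.
-/

structure IsGrundyColoringOn (G : SimpleGraph V) (S : Finset V) (c : V → ℕ) : Prop where
  one_le : ∀ v ∈ S, 1 ≤ c v
  ne_of_adj : ∀ v ∈ S, ∀ w ∈ S, G.Adj v w → c v ≠ c w
  exists_adj : ∀ v ∈ S, ∀ j, 1 ≤ j → j < c v → ∃ u ∈ S, G.Adj v u ∧ c u = j

section

variable {G : SimpleGraph V} {c : V → ℕ}

theorem isGrundyColoringOn_univ_iff [Fintype V] :
    IsGrundyColoringOn G Finset.univ c ↔ IsGrundyColoring G c := by
  constructor
  · rintro ⟨h₁, h₂, h₃⟩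
    refine ⟨fun v => h₁ v (Finset.mem_univ v), fun v w => h₂ v (Finset.mem_univ v) w
      (Finset.mem_univ w), fun v j hj hjv => ?_⟩
    obtain ⟨u, -, hu⟩ := h₃ v (Finset.mem_univ v) j hj hjv
    exact ⟨u, hu⟩
  · rintro ⟨h₁, h₂, h₃⟩
    refine ⟨fun v _ => h₁ v, fun v _ w _ => h₂ v w, fun v _ j hj hjv => ?_⟩
    obtain ⟨u, hu⟩ := h₃ v j hj hjv
    exact ⟨u, Finset.mem_univ u, hu⟩

/-- One step of the greedy (first-fit) algorithm: a new vertex receives the least positive color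
not used by its neighbors in `S`. -/
theorem IsGrundyColoringOn.exists_insert [DecidableEq V] {S : Finset V}
    (h : IsGrundyColoringOn G S c) {v : V} (hv : v ∉ S) :
    ∃ m, IsGrundyColoringOn G (insert v S) (Function.update c v m) := by
  let Free m := 1 ≤ m ∧ ∀ u ∈ S, G.Adj v u → c u ≠ m
  have hfree : ∃ m, Free m := ⟨S.sup c + 1, by omega, fun u hu _ => by
    have := Finset.le_sup (f := c) hu; omega⟩
  classical
  set m := Nat.find hfree
  have hm : Free m := Nat.find_spec hfree
  have hS : ∀ u ∈ S, Function.update c v m u = c u := fun u hu =>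
    Function.update_of_ne (ne_of_mem_of_not_mem hu hv) _ _
  refine ⟨m, ⟨?_, ?_, ?_⟩⟩
  · intro w hw
    obtain rfl | hwS := Finset.mem_insert.mp hw
    · simpa using hm.1
    · simpa [hS w hwS] using h.one_le w hwS
  · intro w hw x hx hwx
    obtain rfl | hwS := Finset.mem_insert.mp hw
    · obtain rfl | hxS := Finset.mem_insert.mp hx
      · exact absurd hwx G.irrefl
      · simpa [hS x hxS] using (hm.2 x hxS hwx).symm
    · obtain rfl | hxS := Finset.mem_insert.mp hx
      · simpa [hS w hwS] using hm.2 w hwS hwx.symm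
      · simpa [hS w hwS, hS x hxS] using h.ne_of_adj w hwS x hxS hwx
  · intro w hw j hj hjw
    obtain rfl | hwS := Finset.mem_insert.mp hw
    · have hjm : j < m := by simpa using hjw
      have hnot : ¬ Free j := Nat.find_min hfree hjm
      simp only [Free, not_and, not_forall, not_not] at hnot
      obtain ⟨u, hu, hwu, rfl⟩ := hnot hj
      exact ⟨u, Finset.mem_insert_of_mem hu, hwu, hS u hu⟩
    · obtain ⟨u, hu, hwu, rfl⟩ := h.exists_adj w hwS j hj (by simpa [hS w hwS] using hjw)
      exact ⟨u, Finset.mem_insert_of_mem hu, hwu, hS u hu⟩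

theorem IsGrundyColoringOn.exists_isGrundyColoring [Fintype V] [DecidableEq V] {S : Finset V}
    (h : IsGrundyColoringOn G S c) :
    ∃ c', (∀ v ∈ S, c' v = c v) ∧ IsGrundyColoring G c' := by
  suffices ∀ D : Finset V, ∃ c', (∀ v ∈ S, c' v = c v) ∧ IsGrundyColoringOn G (S ∪ D) c' by
    obtain ⟨c', hc', hD⟩ := this Finset.univ
    rw [Finset.union_eq_right.mpr (Finset.subset_univ S)] at hD
    exact ⟨c', hc', isGrundyColoringOn_univ_iff.mp hD⟩
  intro D
  induction D using Finset.induction_on with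
  | empty => exact ⟨c, fun _ _ => rfl, by simpa using h⟩
  | insert x D _ ih =>
    obtain ⟨c', hc', hD⟩ := ih
    rw [Finset.union_insert]
    by_cases hx : x ∈ S ∪ D
    · exact ⟨c', hc', by rwa [Finset.insert_eq_of_mem hx]⟩
    obtain ⟨m, hm⟩ := hD.exists_insert hx
    refine ⟨Function.update c' x m, fun v hv => ?_, hm⟩
    rw [Function.update_of_ne (ne_of_mem_of_not_mem (Finset.mem_union_left D hv) hx), hc' v hv]

theorem IsGrundyColoring.le_degree_add_one [Fintype V] [DecidableRel G.Adj]
    (h : IsGrundyColoring G c) (v : V) : c v ≤ G.degree v + 1 := by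
  classical
  have hsub : Finset.Ico 1 (c v) ⊆ (G.neighborFinset v).image c := by
    intro j hj
    obtain ⟨hj₁, hj₂⟩ := Finset.mem_Ico.mp hj
    obtain ⟨u, hvu, rfl⟩ := h.2.2 v j hj₁ hj₂
    exact Finset.mem_image_of_mem c ((G.mem_neighborFinset v u).mpr hvu)
  have := (Finset.card_le_card hsub).trans Finset.card_image_le
  rw [Nat.card_Ico, G.card_neighborFinset_eq_degree] at this
  omega

theorem IsGrundyColoring.isGrundyKColoring {k : ℕ} (h : IsGrundyColoring G c) {v : V}
    (hv : c v = k) (hle : ∀ w, c w ≤ k) : IsGrundyKColoring G c k := by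
  refine ⟨h, hle, fun j hj hjk => ?_⟩
  rcases hjk.lt_or_eq with hjk | rfl
  · obtain ⟨u, -, hu⟩ := h.2.2 v j hj (hv ▸ hjk)
    exact ⟨u, hu⟩
  · exact ⟨v, hv⟩

theorem GrundyColorable.le_add_one_of_degree_le [Fintype V] [DecidableRel G.Adj] {k Δ : ℕ}
    (h : GrundyColorable G k) (hΔ : ∀ v, G.degree v ≤ Δ) : k ≤ Δ + 1 := by
  obtain ⟨c, hc, -, hsurj⟩ := h
  rcases Nat.eq_zero_or_pos k with rfl | hk
  · omega
  obtain ⟨v, rfl⟩ := hsurj k hk le_rfl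
  exact (hc.le_degree_add_one v).trans (by have := hΔ v; omega)

end

section

variable {G : SimpleGraph V}

theorem injective_of_pairwise_adj {ι : Type*} {f : ι → V}
    (hf : Pairwise fun i j ↦ G.Adj (f i) (f j)) : Function.Injective f :=
  Function.injective_iff_pairwise_ne.2 (hf.mono fun _ _ => G.ne_of_adj)

theorem isGrundyColoringOn_clique_privates [DecidableEq V] {n : ℕ} {f p : Fin n → V}
    (hf : Pairwise fun i j ↦ G.Adj (f i) (f j)) (hp : ∀ i, G.Adj (f i) (p i))
    (hpf : ∀ i j, p i ≠ f j) (hpp : ∀ i j, ¬ G.Adj (p i) (p j)) :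
    IsGrundyColoringOn G (Finset.univ.image f ∪ Finset.univ.image p)
      (Function.extend f (fun i => (i : ℕ) + 2) 1) := by
  have hinj := injective_of_pairwise_adj hf
  have hcf : ∀ i, Function.extend f (fun i => (i : ℕ) + 2) 1 (f i) = i + 2 :=
    hinj.extend_apply _ _
  have hcp : ∀ i, Function.extend f (fun i => (i : ℕ) + 2) 1 (p i) = 1 := fun i =>
    Function.extend_apply' _ _ _ fun ⟨j, hj⟩ => hpf i j hj.symm
  have hmem : ∀ {v}, v ∈ Finset.univ.image f ∪ Finset.univ.image p ↔
      (∃ i, f i = v) ∨ ∃ i, p i = v := by simp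
  refine ⟨?_, ?_, ?_⟩
  · intro v hv
    rcases hmem.mp hv with ⟨i, rfl⟩ | ⟨i, rfl⟩ <;> simp [hcf, hcp]
  · intro v hv w hw hvw
    rcases hmem.mp hv with ⟨i, rfl⟩ | ⟨i, rfl⟩ <;> rcases hmem.mp hw with ⟨j, rfl⟩ | ⟨j, rfl⟩
    · rw [hcf, hcf]
      intro hij
      exact G.ne_of_adj hvw (congrArg f (Fin.ext (by omega)))
    · simp [hcf, hcp]
    · simp [hcf, hcp]
    · exact absurd hvw (hpp i j)
  · intro v hv j hj hjv
    rcases hmem.mp hv with ⟨i, rfl⟩ | ⟨i, rfl⟩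
    · rw [hcf] at hjv
      rcases hj.eq_or_lt with rfl | hj
      · exact ⟨p i, hmem.mpr (Or.inr ⟨i, rfl⟩), hp i, hcp i⟩
      · refine ⟨f ⟨j - 2, by omega⟩, hmem.mpr (Or.inl ⟨_, rfl⟩),
          hf fun h => by simp [Fin.ext_iff] at h; omega, ?_⟩
        rw [hcf]
        show j - 2 + 2 = j
        omega
    · rw [hcp] at hjv
      omega

theorem grundyColorable_of_clique_privates [Fintype V] [DecidableEq V] [DecidableRel G.Adj]
    {n : ℕ} {f p : Fin (n + 1) → V}
    (hf : Pairwise fun i j ↦ G.Adj (f i) (f j)) (hp : ∀ i, G.Adj (f i) (p i))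
    (hpf : ∀ i j, p i ≠ f j) (hpp : ∀ i j, ¬ G.Adj (p i) (p j))
    (hΔ : ∀ v, G.degree v ≤ n + 1) : GrundyColorable G (n + 2) := by
  obtain ⟨c, hcS, hc⟩ :=
    (isGrundyColoringOn_clique_privates hf hp hpf hpp).exists_isGrundyColoring
  have hlast : c (f (Fin.last n)) = n + 2 := by
    rw [hcS _ (Finset.mem_union_left _ (Finset.mem_image_of_mem f (Finset.mem_univ _)))]
    simp [(injective_of_pairwise_adj hf).extend_apply]
  exact ⟨c, hc.isGrundyKColoring hlast fun w =>
    (hc.le_degree_add_one w).trans (by have := hΔ w; omega)⟩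

theorem adj_or_adj_of_not_hasInducedC4 (hC4 : ¬ HasInducedC4 G) {a b c d : V}
    (hac : a ≠ c) (hbd : b ≠ d)
    (hab : G.Adj a b) (hbc : G.Adj b c) (hcd : G.Adj c d) (hda : G.Adj d a) :
    G.Adj a c ∨ G.Adj b d := by
  by_contra h
  push Not at h
  exact hC4 ⟨a, b, c, d, hab.ne, hac, hda.ne.symm, hbc.ne, hbd, hcd.ne,
    hab, hbc, hcd, hda, h.1, h.2⟩

theorem exists_unique_adj_notMem [Fintype V] [DecidableEq V] [DecidableRel G.Adj] {x : V}
    {K : Finset V} (hK : K ⊆ G.neighborFinset x) (hdeg : G.degree x = K.card + 1) :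
    ∃! y, G.Adj x y ∧ y ∉ K := by
  have hcard : (G.neighborFinset x \ K).card = 1 := by
    rw [Finset.card_sdiff_of_subset hK, G.card_neighborFinset_eq_degree, hdeg]
    omega
  obtain ⟨y, hy⟩ := Finset.card_eq_one.mp hcard
  have hmem : ∀ z, z ∈ G.neighborFinset x \ K ↔ G.Adj x z ∧ z ∉ K := by simp
  exact ⟨y, (hmem y).mp (hy ▸ Finset.mem_singleton_self y),
    fun z hz => Finset.mem_singleton.mp (hy ▸ (hmem z).mpr hz)⟩

theorem exists_privates_of_clique [Fintype V] [DecidableRel G.Adj] (hC4 : ¬ HasInducedC4 G)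
    {n : ℕ} {f : Fin (n + 1) → V} (hf : Pairwise fun i j ↦ G.Adj (f i) (f j))
    (hdeg : ∀ i, G.degree (f i) = n + 1) :
    ∃ p : Fin (n + 1) → V,
      (∀ i, G.Adj (f i) (p i)) ∧ (∀ i j, p i ≠ f j) ∧ ∀ i j, ¬ G.Adj (p i) (p j) := by
  classical
  have hinj := injective_of_pairwise_adj hf
  have hunique : ∀ i, ∃! y, G.Adj (f i) y ∧ y ∉ (Finset.univ.erase i).image f := fun i =>
    exists_unique_adj_notMem
      (fun y hy => by
        obtain ⟨j, hj, rfl⟩ := Finset.mem_image.mp hy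
        exact (G.mem_neighborFinset _ _).mpr (hf (Finset.ne_of_mem_erase hj).symm))
      (by rw [Finset.card_image_of_injective _ hinj, Finset.card_erase_of_mem
        (Finset.mem_univ i), Finset.card_univ, Fintype.card_fin, hdeg]; omega)
  choose p hp using fun i => (hunique i).exists
  have hpf : ∀ i j, p i ≠ f j := by
    intro i j hij
    by_cases hji : j = i
    · exact G.ne_of_adj (hp i).1 (hij.trans (congrArg f hji)).symm
    · exact (hp i).2 (Finset.mem_image.mpr ⟨j, Finset.mem_erase.mpr ⟨hji, Finset.mem_univ j⟩,
        hij.symm⟩)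
  have hprivate : ∀ i j, G.Adj (f i) (p j) → p j = p i := fun i j hadj =>
    (hunique i).unique ⟨hadj, fun h => by
      obtain ⟨k, -, hk⟩ := Finset.mem_image.mp h
      exact hpf j k hk.symm⟩ (hp i)
  -- a chordless 4-cycle `f i, p i, p j, f j` is excluded, and a chord would be a second
  -- neighbor of `f i` or `f j` outside the clique
  refine ⟨p, fun i => (hp i).1, hpf, fun i j hadj => ?_⟩
  have hne : p i ≠ p j := G.ne_of_adj hadj
  have hij : i ≠ j := fun h => hne (congrArg p h)
  rcases adj_or_adj_of_not_hasInducedC4 hC4 (hpf j i).symm (hpf i j) (hp i).1 hadj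
      (hp j).1.symm (hf hij.symm) with h | h
  · exact hne (hprivate i j h).symm
  · exact hne (hprivate j i h.symm)

theorem grundy_eq_of_isRegularOfDegree_of_clique [Fintype V] [DecidableRel G.Adj] {n : ℕ}
    (hreg : G.IsRegularOfDegree (n + 1)) (hC4 : ¬ HasInducedC4 G) {f : Fin (n + 1) → V}
    (hf : Pairwise fun i j ↦ G.Adj (f i) (f j)) : grundy G = n + 2 := by
  classical
  obtain ⟨p, hp, hpf, hpp⟩ := exists_privates_of_clique hC4 hf fun i => hreg (f i)
  have hΔ : ∀ v, G.degree v ≤ n + 1 := fun v => (hreg v).le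
  exact IsGreatest.csSup_eq ⟨grundyColorable_of_clique_privates hf hp hpf hpp hΔ,
    fun k hk => hk.le_add_one_of_degree_le hΔ⟩

end

theorem fourRegular_c4Free_with_K4_grundy_general {V : Type*} [Fintype V]
    (G : SimpleGraph V) [DecidableRel G.Adj]
    (hreg : G.IsRegularOfDegree 4) (hC4 : ¬ HasInducedC4 G)
    (hK4 : ∃ a b c d : V, G.Adj a b ∧ G.Adj a c ∧ G.Adj a d ∧ G.Adj b c ∧
      G.Adj b d ∧ G.Adj c d) :
    grundy G = 5 := by
  obtain ⟨a, b, c, d, hab, hac, had, hbc, hbd, hcd⟩ := hK4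
  refine grundy_eq_of_isRegularOfDegree_of_clique (n := 3) hreg hC4 (f := ![a, b, c, d]) ?_
  intro i j hij
  fin_cases i <;> fin_cases j <;> simp_all [G.adj_comm]

theorem fourRegular_c4Free_with_K4_grundy {V : Type*} [Fintype V] [Nonempty V]
    (G : SimpleGraph V) [DecidableRel G.Adj]
    (hreg : G.IsRegularOfDegree 4) (hC4 : ¬ HasInducedC4 G)
    (hK4 : ∃ a b c d : V, G.Adj a b ∧ G.Adj a c ∧ G.Adj a d ∧ G.Adj b c ∧
      G.Adj b d ∧ G.Adj c d) :
    grundy G = 5 :=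
  fourRegular_c4Free_with_K4_grundy_general G hreg hC4 hK4
end

section
/- Every 4-regular graph of girth exactly 6 has Grundy number 5. -/
variable {V : Type*}

/-!
`Γ ≤ Δ + 1 = 5`, because a vertex of color `k` sees `k - 1` distinct colors. For `Γ ≥ 5` it
suffices to color some vertices so that each colored vertex sees all smaller colors and one
vertex gets color `5`: first fit colors the rest, with colors at most `Δ + 1 = 5`.

Color a hexagon `x₁ … x₆` by `5, 4, 3, 2, 1, 3` and supply the missing colors through the other
neighbors `p, q` of `x₁` and `y, z` of `x₂` (colors `2, 1`), a neighbor `j` of `x₃` (color `1`),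
a neighbor `d` of `x₆` (color `2`) with a further neighbor `e` (color `1`), and neighbors `b` of
`p` and `u` of `y` (color `1`). Girth `6` leaves only seven pairs of equal color that may be
adjacent. As a vertex other than `v` is adjacent to at most one neighbor of `v`, `j`, `b`, `u`
can be chosen to avoid them once `z ≁ e` and `e` has no neighbor in `N(y) - x₂` or none in
`N(p) - x₁`. Up to swapping `y, z` and `p, q` this holds: the four sets `N(y) - x₂`,
`N(z) - x₂`, `N(p) - x₁`, `N(q) - x₁` are disjoint and `e` has only three neighbors besides `d`.
-/

open SimpleGraph Finset

variable {G : SimpleGraph V}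

/-- Color `0` marks an uncolored vertex. -/
def IsPartialGrundyColoring (G : SimpleGraph V) (c : V → ℕ) : Prop :=
  (∀ u w, G.Adj u w → c u ≠ 0 → c u ≠ c w) ∧
  (∀ u, c u ≠ 0 → ∀ j, 1 ≤ j → j < c u → ∃ w, G.Adj u w ∧ c w = j)

theorem sub_one_le_degree_of_forall_exists_adj {v : V} [Fintype (G.neighborSet v)] {c : V → ℕ}
    {m : ℕ} (h : ∀ j, 1 ≤ j → j < m → ∃ w, G.Adj v w ∧ c w = j) : m - 1 ≤ G.degree v := by
  classical
  have hsub : Ico 1 m ⊆ (G.neighborFinset v).image c := fun j hj => by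
    obtain ⟨w, hvw, rfl⟩ := h j (mem_Ico.mp hj).1 (mem_Ico.mp hj).2
    exact mem_image_of_mem c ((mem_neighborFinset G v w).mpr hvw)
  simpa using (card_le_card hsub).trans card_image_le

theorem IsPartialGrundyColoring.exists_update [DecidableEq V] {c : V → ℕ}
    (hc : IsPartialGrundyColoring G c) {u : V} [Fintype (G.neighborSet u)] (hu : c u = 0) :
    ∃ m, 1 ≤ m ∧ m ≤ G.degree u + 1 ∧ IsPartialGrundyColoring G (Function.update c u m) := by
  classical
  have hfree : ∃ m, 1 ≤ m ∧ ∀ w, G.Adj u w → c w ≠ m :=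
    ⟨(G.neighborFinset u).sup c + 1, by omega, fun w huw => by
      have := le_sup (f := c) ((mem_neighborFinset G u w).mpr huw); omega⟩
  -- first fit: the least color missing around `u`
  set m := Nat.find hfree
  obtain ⟨hm1, hm⟩ : 1 ≤ m ∧ ∀ w, G.Adj u w → c w ≠ m := Nat.find_spec hfree
  have hbelow : ∀ j, 1 ≤ j → j < m → ∃ w, G.Adj u w ∧ c w = j := fun j hj hjm => by
    have := Nat.find_min hfree hjm
    push Not at this
    exact this hj
  refine ⟨m, hm1, by have := sub_one_le_degree_of_forall_exists_adj hbelow; omega, ?_, ?_⟩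
  · intro a b hab ha
    rcases eq_or_ne a u with rfl | hau
    · simpa [Function.update_of_ne hab.ne'] using (hm b hab).symm
    rcases eq_or_ne b u with rfl | hbu
    · simpa [Function.update_of_ne hau] using hm a hab.symm
    simp only [Function.update_of_ne hau, Function.update_of_ne hbu] at ha ⊢
    exact hc.1 a b hab ha
  · intro a ha j hj hja
    rcases eq_or_ne a u with rfl | hau
    · obtain ⟨w, haw, hw⟩ := hbelow j hj (by simpa using hja)
      exact ⟨w, haw, by rwa [Function.update_of_ne haw.ne']⟩
    simp only [Function.update_of_ne hau] at ha hja
    obtain ⟨w, haw, hw⟩ := hc.2 a ha j hj hja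
    have hwu : w ≠ u := by rintro rfl; omega
    exact ⟨w, haw, by rwa [Function.update_of_ne hwu]⟩

theorem IsPartialGrundyColoring.exists_isGrundyColoring [Fintype V] [DecidableRel G.Adj]
    {c : V → ℕ} (hc : IsPartialGrundyColoring G c) {k : ℕ} (hck : ∀ v, c v ≤ k)
    (hdeg : ∀ v, G.degree v < k) :
    ∃ c', IsGrundyColoring G c' ∧ (∀ v, c' v ≤ k) ∧ ∀ v, c v ≠ 0 → c' v = c v := by
  classical
  induction hn : #{v | c v = 0} generalizing c with
  | zero =>
    have hpos : ∀ v, c v ≠ 0 := fun v hv => by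
      simp only [card_eq_zero, filter_eq_empty_iff, mem_univ, true_implies] at hn
      exact hn hv
    exact ⟨c, ⟨fun v => Nat.one_le_iff_ne_zero.mpr (hpos v), fun u w huw => hc.1 u w huw (hpos u),
      fun v => hc.2 v (hpos v)⟩, hck, fun _ _ => rfl⟩
  | succ n ih =>
    obtain ⟨u, hu⟩ : ∃ u, c u = 0 := by
      by_contra! h
      simp [filter_false_of_mem fun v _ => h v] at hn
    obtain ⟨m, hm1, hmdeg, hc'⟩ := hc.exists_update hu
    have hn' : #{v | Function.update c u m v = 0} = n := by
      have : ({v | Function.update c u m v = 0} : Finset V) =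
          ({v | c v = 0} : Finset V).erase u := by
        ext v
        rcases eq_or_ne v u with rfl | hvu <;> simp [*]; omega
      rw [this, card_erase_of_mem (by simpa using hu), hn, Nat.add_sub_cancel]
    obtain ⟨c', hgc', hc'k, hagree⟩ := ih hc' (fun v => by
      rcases eq_or_ne v u with rfl | hvu
      · simpa using hmdeg.trans (hdeg v)
      · simpa [Function.update_of_ne hvu] using hck v) hn'
    refine ⟨c', hgc', hc'k, fun v hv => ?_⟩
    have hvu : v ≠ u := by rintro rfl; exact hv hu
    simpa [Function.update_of_ne hvu] using hagree v (by simpa [Function.update_of_ne hvu] using hv)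

theorem IsGrundyColoring.grundyColorable {c : V → ℕ} (hc : IsGrundyColoring G c) {k : ℕ}
    (hck : ∀ v, c v ≤ k) {v : V} (hv : c v = k) : GrundyColorable G k :=
  ⟨c, hc, hck, fun j hj hjk => (eq_or_lt_of_le hjk).elim (fun h => ⟨v, hv.trans h.symm⟩)
    fun h => (hc.2.2 v j hj (hv ▸ h)).imp fun _ hw => hw.2⟩

theorem IsPartialGrundyColoring.grundyColorable [Fintype V] [DecidableRel G.Adj] {c : V → ℕ}
    (hc : IsPartialGrundyColoring G c) {k : ℕ} (hck : ∀ v, c v ≤ k) {v : V} (hv : c v = k)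
    (hdeg : ∀ v, G.degree v < k) : GrundyColorable G k := by
  obtain ⟨c', hgc', hc'k, hagree⟩ := hc.exists_isGrundyColoring hck hdeg
  have hk : k ≠ 0 := fun h => by have := hdeg v; omega
  exact hgc'.grundyColorable hc'k ((hagree v (hv ▸ hk)).trans hv)

theorem GrundyColorable.le_add_one [Fintype V] [DecidableRel G.Adj] {k d : ℕ}
    (hG : GrundyColorable G k) (hdeg : ∀ v, G.degree v ≤ d) : k ≤ d + 1 := by
  obtain ⟨c, ⟨-, -, hsupp⟩, -, hsurj⟩ := hG
  rcases Nat.eq_zero_or_pos k with rfl | hk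
  · omega
  obtain ⟨v, hv⟩ := hsurj k hk le_rfl
  have := sub_one_le_degree_of_forall_exists_adj (hv ▸ hsupp v)
  have := hdeg v
  omega

/-- Two entries of the pattern on the same vertex automatically carry the same color: otherwise
the higher one would need a neighbor in the color class of the lower one, which is independent. -/
theorem grundyColorable_of_pattern [Fintype V] [DecidableRel G.Adj] {ι : Type*} {k : ℕ}
    (hdeg : ∀ v, G.degree v < k) (φ : ι → V) (col : ι → ℕ) (hcol : ∀ i, 1 ≤ col i ∧ col i ≤ k)
    (htop : ∃ i, col i = k) (hindep : ∀ i i', col i = col i' → ¬ G.Adj (φ i) (φ i'))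
    (hsupp : ∀ i j, 1 ≤ j → j < col i → ∃ i', G.Adj (φ i) (φ i') ∧ col i' = j) :
    GrundyColorable G k := by
  classical
  have hwd : ∀ i i', φ i = φ i' → col i = col i' := by
    suffices ∀ i i', φ i = φ i' → ¬ col i < col i' from fun i i' h =>
      le_antisymm (not_lt.mp (this i' i h.symm)) (not_lt.mp (this i i' h))
    intro i i' h hlt
    obtain ⟨i'', hadj, hcol''⟩ := hsupp i' (col i) (hcol i).1 hlt
    exact hindep i i'' hcol''.symm (h ▸ hadj)
  let c : V → ℕ := fun v => if h : ∃ i, φ i = v then col h.choose else 0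
  have hc : ∀ i, c (φ i) = col i := fun i => by
    have h : ∃ i', φ i' = φ i := ⟨i, rfl⟩
    simpa [c, h] using hwd _ _ h.choose_spec
  have hcolored : ∀ v, c v ≠ 0 → ∃ i, φ i = v := fun v hv => by
    by_contra h
    simp [c, h] at hv
  have hpartial : IsPartialGrundyColoring G c := by
    refine ⟨fun u w huw hu => ?_, fun u hu j hj hju => ?_⟩
    · obtain ⟨i, rfl⟩ := hcolored u hu
      by_cases hw : c w = 0
      · rwa [hw]
      obtain ⟨i', rfl⟩ := hcolored w hw
      rw [hc, hc]
      exact fun h => hindep i i' h huw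
    · obtain ⟨i, rfl⟩ := hcolored u hu
      obtain ⟨i', hadj, hi'⟩ := hsupp i j hj (hc i ▸ hju)
      exact ⟨φ i', hadj, (hc i').trans hi'⟩
  obtain ⟨i, hi⟩ := htop
  refine hpartial.grundyColorable (fun v => ?_) ((hc i).trans hi) hdeg
  by_cases hv : c v = 0
  · omega
  obtain ⟨i', rfl⟩ := hcolored v hv
  exact hc i' ▸ (hcol i').2

section Girth

variable {a b c d e : V}

theorem not_adj_of_adj_of_adj (h : 4 ≤ G.egirth) (hab : G.Adj a b) (hbc : G.Adj b c) :
    ¬ G.Adj c a := fun hca => by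
  have hw : (Walk.cons hab (.cons hbc (.cons hca .nil))).IsCycle := by
    simp [Walk.isCycle_def, Walk.isTrail_def, hab.ne, hbc.ne, hca.ne, hab.ne', hca.ne']
  exact absurd (h.trans (egirth_le_length hw)) (by norm_num)

theorem eq_or_eq_of_adj_of_adj_of_adj_of_adj (h : 5 ≤ G.egirth) (hab : G.Adj a b)
    (hbc : G.Adj b c) (hcd : G.Adj c d) (hda : G.Adj d a) : a = c ∨ b = d := by
  by_contra! hne
  have hw : (Walk.cons hab (.cons hbc (.cons hcd (.cons hda .nil)))).IsCycle := by
    simp [Walk.isCycle_def, Walk.isTrail_def, hab.ne, hbc.ne, hcd.ne, hda.ne,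
      hab.ne', hda.ne', hne.1, hne.2, hne.1.symm]
  exact absurd (h.trans (egirth_le_length hw)) (by norm_num)

theorem not_adj_of_walk_three (h : 5 ≤ G.egirth) (hab : G.Adj a b) (hbc : G.Adj b c)
    (hcd : G.Adj c d) (hac : a ≠ c) (hbd : b ≠ d) : ¬ G.Adj d a := fun hda =>
  (eq_or_eq_of_adj_of_adj_of_adj_of_adj h hab hbc hcd hda).elim hac hbd

/-- Without cycles of length `3` and `5` there are no closed walks of length `5` at all. -/
theorem not_adj_of_walk_four (h : 6 ≤ G.egirth) (hab : G.Adj a b) (hbc : G.Adj b c)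
    (hcd : G.Adj c d) (hde : G.Adj d e) : ¬ G.Adj e a := fun hea => by
  have h4 : 4 ≤ G.egirth := le_trans (by norm_num) h
  rcases eq_or_ne a c with rfl | hac
  · exact not_adj_of_adj_of_adj h4 hcd hde hea
  rcases eq_or_ne a d with rfl | had
  · exact not_adj_of_adj_of_adj h4 hab hbc hcd
  rcases eq_or_ne b d with rfl | hbd
  · exact not_adj_of_adj_of_adj h4 hde hea hab
  rcases eq_or_ne b e with rfl | hbe
  · exact not_adj_of_adj_of_adj h4 hbc hcd hde
  rcases eq_or_ne c e with rfl | hce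
  · exact not_adj_of_adj_of_adj h4 hea hab hbc
  have hw : (Walk.cons hab (.cons hbc (.cons hcd (.cons hde (.cons hea .nil))))).IsCycle := by
    simp [Walk.isCycle_def, Walk.isTrail_def, hab.ne, hbc.ne, hcd.ne, hde.ne, hea.ne,
      hab.ne', hea.ne', hac, had, hbd, hbe, hce, hac.symm, had.symm]
  exact absurd (h.trans (egirth_le_length hw)) (by norm_num)

end Girth

/-- A vertex `f ≠ v` is adjacent to at most one neighbor of `v`, so only `|F| + |X|` neighbors
of `v` are excluded. -/
theorem exists_adj_forall_not_adj (h : 5 ≤ G.egirth) (v : V) [Fintype (G.neighborSet v)]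
    (X F : List V) (hvF : F.Forall (v ≠ ·)) (hcard : F.length + X.length < G.degree v) :
    ∃ w, G.Adj v w ∧ X.Forall (w ≠ ·) ∧ F.Forall (¬ G.Adj w ·) := by
  classical
  let blocked (f : V) : Finset V := {w ∈ G.neighborFinset v | G.Adj w f}
  have hblocked : ∀ f ∈ F.toFinset, #(blocked f) ≤ 1 := fun f hf => by
    refine card_le_one.mpr fun w hw w' hw' => ?_
    simp only [blocked, mem_filter, mem_neighborFinset] at hw hw'
    refine (eq_or_eq_of_adj_of_adj_of_adj_of_adj h hw.1 hw.2 hw'.2.symm hw'.1.symm).resolve_left ?_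
    rintro rfl
    exact List.forall_iff_forall_mem.mp hvF v (List.mem_toFinset.mp hf) rfl
  have hcard' : #(X.toFinset ∪ F.toFinset.biUnion blocked) < #(G.neighborFinset v) := calc
    _ ≤ #X.toFinset + #(F.toFinset.biUnion blocked) := card_union_le _ _
    _ ≤ X.length + F.length := add_le_add X.toFinset_card_le
        (card_biUnion_le.trans ((sum_le_sum hblocked).trans (by simpa using F.toFinset_card_le)))
    _ < _ := by rw [card_neighborFinset_eq_degree]; omega
  obtain ⟨w, hw, hwbad⟩ := exists_mem_notMem_of_card_lt_card hcard'
  rw [mem_neighborFinset] at hw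
  simp only [mem_union, List.mem_toFinset, mem_biUnion, not_or, not_exists, not_and] at hwbad
  refine ⟨w, hw, List.forall_iff_forall_mem.mpr fun x hx hwx => hwbad.1 (hwx ▸ hx),
    List.forall_iff_forall_mem.mpr fun f hf hwf => hwbad.2 f hf ?_⟩
  simp [blocked, hw, hwf]

theorem egirth_eq_of_girth_eq {n : ℕ} (hn : n ≠ 0) (hg : G.girth = n) : G.egirth = n := by
  have hne : G.egirth ≠ ⊤ := fun h => hn (by simp [← hg, girth, h])
  rw [← ENat.natCast_toNat hne, ← hg, girth]

theorem exists_hexagon (hg : G.girth = 6) :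
    ∃ x1 x2 x3 x4 x5 x6 : V, G.Adj x1 x2 ∧ G.Adj x2 x3 ∧ G.Adj x3 x4 ∧ G.Adj x4 x5 ∧
      G.Adj x5 x6 ∧ G.Adj x6 x1 ∧ x1 ≠ x3 ∧ x2 ≠ x4 ∧ x3 ≠ x5 ∧ x4 ≠ x6 ∧ x5 ≠ x1 ∧ x6 ≠ x2 := by
  have hcyc : ¬ G.IsAcyclic := fun h => by simp [girth_eq_zero.mpr h] at hg
  obtain ⟨a, w, hw, hlen⟩ := exists_girth_eq_length.mpr hcyc
  rw [hg] at hlen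
  have hadj : ∀ i < 6, G.Adj (w.getVert i) (w.getVert (i + 1)) := fun i hi =>
    w.adj_getVert_succ (by omega)
  have hinj : ∀ i k, 1 ≤ i → i ≤ 6 → 1 ≤ k → k ≤ 6 → i ≠ k → w.getVert i ≠ w.getVert k :=
    fun i k hi hi' hk hk' hik h => hik (hw.getVert_injOn ⟨hi, by omega⟩ ⟨hk, by omega⟩ h)
  have h06 : w.getVert 0 = w.getVert 6 := by rw [w.getVert_zero, hlen, w.getVert_length]
  refine ⟨w.getVert 1, w.getVert 2, w.getVert 3, w.getVert 4, w.getVert 5, w.getVert 6,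
    hadj 1 (by norm_num), hadj 2 (by norm_num), hadj 3 (by norm_num), hadj 4 (by norm_num),
    hadj 5 (by norm_num), h06 ▸ hadj 0 (by norm_num), ?_, ?_, ?_, ?_, ?_, ?_⟩ <;>
    exact hinj _ _ (by norm_num) (by norm_num) (by norm_num) (by norm_num) (by norm_num)

/-- The seven non-adjacency hypotheses are the pairs of equal color that are not joined by a path
of length at most `4` in the pattern; all other such pairs are non-adjacent by the girth. -/
theorem grundyColorable_five_of_hexagon [Fintype V] [DecidableRel G.Adj]
    (hdeg : ∀ v, G.degree v < 5) (h6 : 6 ≤ G.egirth) {x1 x2 x3 x4 x5 x6 p q y z j d e b u : V}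
    (a12 : G.Adj x1 x2) (a23 : G.Adj x2 x3) (a34 : G.Adj x3 x4) (a45 : G.Adj x4 x5)
    (a56 : G.Adj x5 x6) (a61 : G.Adj x6 x1) (a1p : G.Adj x1 p) (a1q : G.Adj x1 q)
    (a2y : G.Adj x2 y) (a2z : G.Adj x2 z) (a3j : G.Adj x3 j) (a6d : G.Adj x6 d) (ade : G.Adj d e)
    (apb : G.Adj p b) (ayu : G.Adj y u)
    (n13 : x1 ≠ x3) (n24 : x2 ≠ x4) (n35 : x3 ≠ x5) (n46 : x4 ≠ x6) (n51 : x5 ≠ x1)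
    (n62 : x6 ≠ x2) (npq : p ≠ q) (np2 : p ≠ x2) (np6 : p ≠ x6) (nq2 : q ≠ x2) (nq6 : q ≠ x6)
    (nyz : y ≠ z) (ny1 : y ≠ x1) (ny3 : y ≠ x3) (nz1 : z ≠ x1) (nz3 : z ≠ x3) (nj2 : j ≠ x2)
    (nj4 : j ≠ x4) (nd1 : d ≠ x1) (nd5 : d ≠ x5) (ne6 : e ≠ x6) (nb1 : b ≠ x1) (nu2 : u ≠ x2)
    (hux5 : ¬ G.Adj u x5) (hje : ¬ G.Adj j e) (hze : ¬ G.Adj z e) (hbe : ¬ G.Adj b e)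
    (hue : ¬ G.Adj u e) (hbj : ¬ G.Adj b j) (hub : ¬ G.Adj u b) : GrundyColorable G 5 := by
  have h5 : 5 ≤ G.egirth := le_trans (by norm_num) h6
  have hqx5 := not_adj_of_walk_three h5 a56 a61 a1q n51 nq6.symm
  have hzx5 := not_adj_of_walk_four h6 a56 a61 a12 a2z
  have hjx5 := not_adj_of_walk_three h5 a45.symm a34.symm a3j n35.symm nj4.symm
  have hex5 := not_adj_of_walk_three h5 a56 a6d ade nd5.symm ne6.symm
  have hbx5 := not_adj_of_walk_four h6 a56 a61 a1p apb
  have hzq := not_adj_of_walk_three h5 a1q.symm a12 a2z nq2 nz1.symm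
  have hjq := not_adj_of_walk_four h6 a1q.symm a12 a23 a3j
  have heq := not_adj_of_walk_four h6 a1q.symm a61.symm a6d ade
  have hbq := not_adj_of_walk_three h5 a1q.symm a1p apb npq.symm nb1.symm
  have huq := not_adj_of_walk_four h6 a1q.symm a12 a2y ayu
  have hjz := not_adj_of_walk_three h5 a2z.symm a23 a3j nz3 nj2.symm
  have hbz := not_adj_of_walk_four h6 a2z.symm a12.symm a1p apb
  have huz := not_adj_of_walk_three h5 a2z.symm a2y ayu nyz.symm nu2.symm
  have huj := not_adj_of_walk_four h6 a3j.symm a23.symm a2y ayu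
  have hpx4 := not_adj_of_walk_four h6 a34.symm a23.symm a12.symm a1p
  have hyx4 := not_adj_of_walk_three h5 a34.symm a23.symm a2y n24.symm ny3.symm
  have hdx4 := not_adj_of_walk_three h5 a45 a56 a6d n46 nd5.symm
  have hyp := not_adj_of_walk_three h5 a1p.symm a12 a2y np2 ny1.symm
  have hdp := not_adj_of_walk_three h5 a1p.symm a61.symm a6d np6 nd1.symm
  have hdy := not_adj_of_walk_four h6 a2y.symm a12.symm a61.symm a6d
  have hx6x3 := not_adj_of_walk_three h5 a23.symm a12.symm a61.symm n13.symm n62.symm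
  refine grundyColorable_of_pattern hdeg ![x1, x2, x3, x4, x5, x6, p, q, y, z, j, d, e, b, u]
    ![5, 4, 3, 2, 1, 3, 2, 1, 2, 1, 1, 2, 1, 1, 1] (by decide) ⟨0, rfl⟩ (fun i i' => ?_) ?_
  · fin_cases i <;> fin_cases i' <;> simp <;> first | assumption | (rw [G.adj_comm]; assumption)
  · intro i m hm hmi
    fin_cases i <;> simp at hmi <;> first | omega | interval_cases m <;>
      simp [Fin.exists_fin_succ, a56.symm, a61.symm, *]

/-- `b ∈ N(p) - x₁` and `u ∈ N(y) - x₂` are chosen one after the other, the one on the side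
without neighbors of `e` last. -/
theorem grundyColorable_five_of_hexagon_of_free_side [Fintype V] [DecidableRel G.Adj]
    (hreg : G.IsRegularOfDegree 4) (h6 : 6 ≤ G.egirth) {x1 x2 x3 x4 x5 x6 j d e : V}
    (a12 : G.Adj x1 x2) (a23 : G.Adj x2 x3) (a34 : G.Adj x3 x4) (a45 : G.Adj x4 x5)
    (a56 : G.Adj x5 x6) (a61 : G.Adj x6 x1) (a3j : G.Adj x3 j) (a6d : G.Adj x6 d)
    (ade : G.Adj d e) (n13 : x1 ≠ x3) (n24 : x2 ≠ x4) (n35 : x3 ≠ x5) (n46 : x4 ≠ x6)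
    (n51 : x5 ≠ x1) (n62 : x6 ≠ x2) (nj2 : j ≠ x2) (nj4 : j ≠ x4) (nd1 : d ≠ x1) (nd5 : d ≠ x5)
    (ne6 : e ≠ x6) (hje : ¬ G.Adj j e) (p q y z : V) (a1p : G.Adj x1 p) (a1q : G.Adj x1 q)
    (a2y : G.Adj x2 y) (a2z : G.Adj x2 z) (npq : p ≠ q) (np2 : p ≠ x2) (np6 : p ≠ x6)
    (nq2 : q ≠ x2) (nq6 : q ≠ x6) (nyz : y ≠ z) (ny1 : y ≠ x1) (ny3 : y ≠ x3) (nz1 : z ≠ x1)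
    (nz3 : z ≠ x3) (hze : ¬ G.Adj z e)
    (hfree : (∀ w, G.Adj y w → w ≠ x2 → ¬ G.Adj w e) ∨ (∀ w, G.Adj p w → w ≠ x1 → ¬ G.Adj w e)) :
    GrundyColorable G 5 := by
  have h5 : 5 ≤ G.egirth := le_trans (by norm_num) h6
  have hdeg : ∀ v, G.degree v < 5 := fun v => by simp [hreg v]
  have hx2x5 := not_adj_of_walk_three h5 a45.symm a34.symm a23.symm n35.symm n24.symm
  have hx3p := not_adj_of_walk_three h5 a1p.symm a12 a23 np2 n13
  have hyp := not_adj_of_walk_three h5 a1p.symm a12 a2y np2 ny1.symm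
  have hny5 : y ≠ x5 := by rintro rfl; exact hx2x5 a2y
  have hnpj : p ≠ j := by rintro rfl; exact hx3p a3j
  rcases hfree with hy | hp
  · have hnpe : p ≠ e := by
      rintro rfl; exact not_adj_of_walk_three h5 a1p.symm a61.symm a6d np6 nd1.symm ade
    obtain ⟨b, apb, nb1, hbe, hbj⟩ :=
      exists_adj_forall_not_adj h5 p [x1] [e, j] ⟨hnpe, hnpj⟩ (by simp [hreg p])
    have hnyb : y ≠ b := by
      rintro rfl; exact not_adj_of_walk_three h5 a2y.symm a12.symm a1p ny1 np2.symm apb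
    obtain ⟨u, ayu, nu2, hux5, hub⟩ :=
      exists_adj_forall_not_adj h5 y [x2] [x5, b] ⟨hny5, hnyb⟩ (by simp [hreg y])
    exact grundyColorable_five_of_hexagon hdeg h6 a12 a23 a34 a45 a56 a61 a1p a1q a2y a2z a3j a6d
      ade apb ayu n13 n24 n35 n46 n51 n62 npq np2 np6 nq2 nq6 nyz ny1 ny3 nz1 nz3 nj2 nj4 nd1 nd5
      ne6 nb1 nu2 hux5 hje hze hbe (hy u ayu nu2) hbj hub
  · have hnye : y ≠ e := by
      rintro rfl; exact not_adj_of_walk_four h6 a2y.symm a12.symm a61.symm a6d ade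
    obtain ⟨u, ayu, nu2, hux5, hue⟩ :=
      exists_adj_forall_not_adj h5 y [x2] [x5, e] ⟨hny5, hnye⟩ (by simp [hreg y])
    have hnpu : p ≠ u := by rintro rfl; exact hyp ayu
    obtain ⟨b, apb, nb1, hbj, hbu⟩ :=
      exists_adj_forall_not_adj h5 p [x1] [j, u] ⟨hnpj, hnpu⟩ (by simp [hreg p])
    exact grundyColorable_five_of_hexagon hdeg h6 a12 a23 a34 a45 a56 a61 a1p a1q a2y a2z a3j a6d
      ade apb ayu n13 n24 n35 n46 n51 n62 npq np2 np6 nq2 nq6 nyz ny1 ny3 nz1 nz3 nj2 nj4 nd1 nd5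
      ne6 nb1 nu2 hux5 hje hze (hp b apb nb1) hue hbj fun h => hbu h.symm

/-- The sets `N(y) - x₂`, `N(z) - x₂`, `N(p) - x₁`, `N(q) - x₁` are pairwise disjoint and avoid
`d`, so the at most three neighbors of `e` other than `d` miss one of them. -/
theorem forall_not_adj_of_degree_le_four (h6 : 6 ≤ G.egirth) {x1 x2 p q y z d e : V}
    [Fintype (G.neighborSet e)] (hdeg : G.degree e ≤ 4) (a12 : G.Adj x1 x2) (a1p : G.Adj x1 p)
    (a1q : G.Adj x1 q) (a2y : G.Adj x2 y) (a2z : G.Adj x2 z) (npq : p ≠ q) (nyz : y ≠ z)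
    (ade : G.Adj d e) (hdp : ¬ G.Adj d p) (hdq : ¬ G.Adj d q) (hdy : ¬ G.Adj d y)
    (hdz : ¬ G.Adj d z) :
    (∀ w, G.Adj y w → w ≠ x2 → ¬ G.Adj w e) ∨ (∀ w, G.Adj z w → w ≠ x2 → ¬ G.Adj w e) ∨
      (∀ w, G.Adj p w → w ≠ x1 → ¬ G.Adj w e) ∨ (∀ w, G.Adj q w → w ≠ x1 → ¬ G.Adj w e) := by
  classical
  have h5 : 5 ≤ G.egirth := le_trans (by norm_num) h6
  by_contra! h
  obtain ⟨⟨wy, aywy, nwy, awye⟩, ⟨wz, azwz, -, awze⟩, ⟨wp, apwp, nwp, awpe⟩,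
    ⟨wq, aqwq, -, awqe⟩⟩ := h
  have hnodup : [d, wy, wz, wp, wq].Nodup := by
    simp only [List.nodup_cons, List.mem_cons, List.not_mem_nil, or_false, not_or,
      List.nodup_nil, not_false_eq_true, and_true]
    refine ⟨⟨?_, ?_, ?_, ?_⟩, ⟨?_, ?_, ?_⟩, ⟨?_, ?_⟩, ?_⟩ <;> rintro rfl
    · exact hdy aywy.symm
    · exact hdz azwz.symm
    · exact hdp apwp.symm
    · exact hdq aqwq.symm
    · exact not_adj_of_walk_three h5 aywy.symm a2y.symm a2z nwy nyz azwz
    · exact not_adj_of_walk_four h6 aywy.symm a2y.symm a12.symm a1p apwp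
    · exact not_adj_of_walk_four h6 aywy.symm a2y.symm a12.symm a1q aqwq
    · exact not_adj_of_walk_four h6 azwz.symm a2z.symm a12.symm a1p apwp
    · exact not_adj_of_walk_four h6 azwz.symm a2z.symm a12.symm a1q aqwq
    · exact not_adj_of_walk_three h5 apwp.symm a1p.symm a1q nwp npq aqwq
  have hsub : [d, wy, wz, wp, wq].toFinset ⊆ G.neighborFinset e := by
    intro w
    simp only [List.toFinset_cons, List.toFinset_nil, insert_empty_eq, mem_insert, mem_singleton,
      mem_neighborFinset]
    rintro (rfl | rfl | rfl | rfl | rfl)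
    exacts [ade.symm, awye.symm, awze.symm, awpe.symm, awqe.symm]
  have := card_le_card hsub
  rw [List.toFinset_card_of_nodup hnodup, card_neighborFinset_eq_degree] at this
  simp at this
  omega

theorem grundyColorable_five_of_girth_eq_six [Fintype V] [DecidableRel G.Adj]
    (hreg : G.IsRegularOfDegree 4) (hg : G.girth = 6) : GrundyColorable G 5 := by
  have h6 : 6 ≤ G.egirth := (egirth_eq_of_girth_eq (by norm_num) hg).ge
  have h5 : 5 ≤ G.egirth := le_trans (by norm_num) h6
  have h4 : 4 ≤ G.egirth := le_trans (by norm_num) h6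
  obtain ⟨x1, x2, x3, x4, x5, x6, a12, a23, a34, a45, a56, a61, n13, n24, n35, n46, n51, n62⟩ :=
    exists_hexagon hg
  obtain ⟨p, a1p, ⟨np2, np6⟩, -⟩ :=
    exists_adj_forall_not_adj h5 x1 [x2, x6] [] trivial (by simp [hreg x1])
  obtain ⟨q, a1q, ⟨nq2, nq6, nqp⟩, -⟩ :=
    exists_adj_forall_not_adj h5 x1 [x2, x6, p] [] trivial (by simp [hreg x1])
  obtain ⟨y, a2y, ⟨ny1, ny3⟩, -⟩ :=
    exists_adj_forall_not_adj h5 x2 [x1, x3] [] trivial (by simp [hreg x2])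
  obtain ⟨z, a2z, ⟨nz1, nz3, nzy⟩, -⟩ :=
    exists_adj_forall_not_adj h5 x2 [x1, x3, y] [] trivial (by simp [hreg x2])
  obtain ⟨d, a6d, ⟨nd1, nd5⟩, -⟩ :=
    exists_adj_forall_not_adj h5 x6 [x1, x5] [] trivial (by simp [hreg x6])
  obtain ⟨e, ade, ne6, -⟩ := exists_adj_forall_not_adj h5 d [x6] [] trivial (by simp [hreg d])
  have hnx3e : x3 ≠ e := by rintro rfl; exact not_adj_of_walk_four h6 a34 a45 a56 a6d ade
  obtain ⟨j, a3j, ⟨nj2, nj4⟩, hje⟩ :=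
    exists_adj_forall_not_adj h5 x3 [x2, x4] [e] hnx3e (by simp [hreg x3])
  have hne2 : e ≠ x2 := by
    rintro rfl; exact not_adj_of_walk_three h5 a12.symm a61.symm a6d n62.symm nd1.symm ade
  have H := grundyColorable_five_of_hexagon_of_free_side hreg h6 a12 a23 a34 a45 a56 a61 a3j a6d
    ade n13 n24 n35 n46 n51 n62 nj2 nj4 nd1 nd5 ne6 hje
  by_cases hye : G.Adj y e
  · exact H p q y z a1p a1q a2y a2z nqp.symm np2 np6 nq2 nq6 nzy.symm ny1 ny3 nz1 nz3
      (not_adj_of_walk_three h5 hye.symm a2y.symm a2z hne2 nzy.symm)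
      (Or.inl fun w ayw _ awe => not_adj_of_adj_of_adj h4 ayw awe hye.symm)
  by_cases hze : G.Adj z e
  · exact H p q z y a1p a1q a2z a2y nqp.symm np2 np6 nq2 nq6 nzy nz1 nz3 ny1 ny3 hye
      (Or.inl fun w azw _ awe => not_adj_of_adj_of_adj h4 azw awe hze.symm)
  rcases forall_not_adj_of_degree_le_four h6 (hreg e).le a12 a1p a1q a2y a2z nqp.symm nzy.symm ade
    (not_adj_of_walk_three h5 a1p.symm a61.symm a6d np6 nd1.symm)
    (not_adj_of_walk_three h5 a1q.symm a61.symm a6d nq6 nd1.symm)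
    (not_adj_of_walk_four h6 a2y.symm a12.symm a61.symm a6d)
    (not_adj_of_walk_four h6 a2z.symm a12.symm a61.symm a6d) with hy | hz | hp | hq
  · exact H p q y z a1p a1q a2y a2z nqp.symm np2 np6 nq2 nq6 nzy.symm ny1 ny3 nz1 nz3 hze (.inl hy)
  · exact H p q z y a1p a1q a2z a2y nqp.symm np2 np6 nq2 nq6 nzy nz1 nz3 ny1 ny3 hye (.inl hz)
  · exact H p q y z a1p a1q a2y a2z nqp.symm np2 np6 nq2 nq6 nzy.symm ny1 ny3 nz1 nz3 hze (.inr hp)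
  · exact H q p y z a1q a1p a2y a2z nqp nq2 nq6 np2 np6 nzy.symm ny1 ny3 nz1 nz3 hze (.inr hq)

theorem fourRegular_girth_six_grundy {V : Type*} [Fintype V]
    (G : SimpleGraph V) [DecidableRel G.Adj]
    (hreg : G.IsRegularOfDegree 4) (hg : G.girth = 6) :
    grundy G = 5 :=
  IsGreatest.csSup_eq ⟨grundyColorable_five_of_girth_eq_six hreg hg,
    fun _ hk => hk.le_add_one fun v => (hreg v).le⟩
end

section
/- Let r ≥ 2 and 0 ≤ k ≤ (r−2)/2. If G is an r-regular graph containing an induced complete bipartite subgraph K_{r−k, k+2} with parts A (|A| = r−k) and B (|B| = k+2), where moreover every edge of G between A and B is present (A and B fully joined), then in every Grundy coloring of G no vertex of this K_{r−k,k+2} receives color r+1. -/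
variable {V : Type*}

/-!
Suppose a vertex `v` of `A ∪ B` has color `r + 1`. Since `v` has only `r` neighbors, they carry
the colors `1, …, r` bijectively; in particular the side `Y` opposite to `v`, which lies in the
neighborhood of `v`, is rainbow. Let `b ∈ Y` have the largest color. For every other `y ∈ Y`,
`b` needs a neighbor of color `c y`; these neighbors are distinct and none lies in the side `X`
of `v`, which is joined to `y`. Together with `X ⊆ N(b)` this gives `b` at least
`|X| + |Y| - 1 = r + 1` neighbors.
-/

variable {G : SimpleGraph V} {c : V → ℕ}

namespace IsGrundyColoring

theorem injOn_neighborFinset_of_eq_degree_add_one [G.LocallyFinite]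
    (hc : IsGrundyColoring G c) {v : V} (hv : c v = G.degree v + 1) :
    Set.InjOn c (G.neighborFinset v) := by
  apply Finset.injOn_of_card_image_eq
  have hcolors : Finset.Icc 1 (G.degree v) ⊆ (G.neighborFinset v).image c := by
    intro j hj
    rw [Finset.mem_Icc] at hj
    obtain ⟨u, hvu, rfl⟩ := hc.2.2 v j hj.1 (by omega)
    exact Finset.mem_image_of_mem c ((G.mem_neighborFinset v u).2 hvu)
  have hle := Finset.card_le_card hcolors
  rw [Nat.card_Icc, Nat.add_sub_cancel, ← G.card_neighborFinset_eq_degree] at hle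
  exact le_antisymm Finset.card_image_le hle

/-- The neighbors of `b` realizing the colors of `S` avoid `X`, since each of them would
otherwise be adjacent to a vertex of `S` of its own color. -/
theorem card_add_card_le_degree [DecidableEq V] [G.LocallyFinite]
    (hc : IsGrundyColoring G c) {b : V} {X S : Finset V}
    (hbX : ∀ x ∈ X, G.Adj b x) (hXS : ∀ x ∈ X, ∀ s ∈ S, G.Adj x s)
    (hS : Set.InjOn c S) (hlt : ∀ s ∈ S, c s < c b) :
    X.card + S.card ≤ G.degree b := by
  have hwit : ∀ s ∈ S, ∃ u, G.Adj b u ∧ c u = c s :=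
    fun s hs => hc.2.2 b (c s) (hc.1 s) (hlt s hs)
  choose! u hbu hcu using hwit
  have hu : Set.InjOn u S := fun s hs s' hs' h => hS hs hs' (by rw [← hcu s hs, ← hcu s' hs', h])
  have hdisj : Disjoint X (S.image u) := by
    rw [Finset.disjoint_right]
    rintro _ hx hX
    obtain ⟨s, hs, rfl⟩ := Finset.mem_image.1 hx
    exact hc.2.1 _ _ (hXS _ hX s hs) (hcu s hs)
  have hsub : X ∪ S.image u ⊆ G.neighborFinset b := by
    intro w hw
    rw [G.mem_neighborFinset]
    rcases Finset.mem_union.1 hw with hw | hw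
    · exact hbX w hw
    · obtain ⟨s, hs, rfl⟩ := Finset.mem_image.1 hw
      exact hbu s hs
  calc X.card + S.card = (X ∪ S.image u).card := by
        rw [Finset.card_union_of_disjoint hdisj, Finset.card_image_of_injOn hu]
    _ ≤ G.degree b := by
        rw [← G.card_neighborFinset_eq_degree]
        exact Finset.card_le_card hsub

theorem card_add_card_le_of_eq_add_one [DecidableEq V] [G.LocallyFinite] {r : ℕ}
    (hc : IsGrundyColoring G c) (hreg : G.IsRegularOfDegree r) {X Y : Finset V}
    (hY : Y.Nonempty) (hjoin : ∀ x ∈ X, ∀ y ∈ Y, G.Adj x y) {v : V} (hvX : v ∈ X)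
    (hv : c v = r + 1) :
    X.card + Y.card ≤ r + 1 := by
  have hY_rainbow : Set.InjOn c Y := by
    refine (hc.injOn_neighborFinset_of_eq_degree_add_one (by rw [hreg v, hv])).mono ?_
    intro y hy
    exact (G.mem_neighborFinset v y).2 (hjoin v hvX y hy)
  obtain ⟨b, hbY, hbmax⟩ := Y.exists_max_image c hY
  have hlt : ∀ s ∈ Y.erase b, c s < c b := fun s hs =>
    (hbmax s (Finset.mem_of_mem_erase hs)).lt_of_ne fun h =>
      Finset.ne_of_mem_erase hs (hY_rainbow (Finset.mem_of_mem_erase hs) hbY h)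
  have hle := hc.card_add_card_le_degree (fun x hx => (hjoin x hx b hbY).symm)
    (fun x hx s hs => hjoin x hx s (Finset.mem_of_mem_erase hs))
    (hY_rainbow.mono (Finset.erase_subset b Y)) hlt
  rw [Finset.card_erase_of_mem hbY, hreg b] at hle
  have := hY.card_pos
  omega

end IsGrundyColoring

theorem kkplus2_no_color_r_plus_one_general {V : Type*} [Fintype V] [DecidableEq V]
    (G : SimpleGraph V) [DecidableRel G.Adj] (r k : ℕ)
    (hk : 2 * k + 2 ≤ r) (hreg : G.IsRegularOfDegree r)
    (A B : Finset V)
    (hA : A.card + k = r) (hB : B.card = k + 2)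
    (hjoin : ∀ a ∈ A, ∀ b ∈ B, G.Adj a b)
    (c : V → ℕ) (hc : IsGrundyColoring G c) :
    ∀ v ∈ A ∪ B, c v ≠ r + 1 := by
  intro v hv hcv
  have hA_ne : A.Nonempty := Finset.card_pos.1 (by omega)
  have hB_ne : B.Nonempty := Finset.card_pos.1 (by omega)
  rcases Finset.mem_union.1 hv with hvA | hvB
  · have := hc.card_add_card_le_of_eq_add_one hreg hB_ne hjoin hvA hcv
    omega
  · have := hc.card_add_card_le_of_eq_add_one hreg hA_ne
      (fun b hb a ha => (hjoin a ha b hb).symm) hvB hcv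
    omega

theorem kkplus2_no_color_r_plus_one {V : Type*} [Fintype V] [DecidableEq V]
    (G : SimpleGraph V) [DecidableRel G.Adj] (r k : ℕ) (hr : 2 ≤ r)
    (hk : 2 * k + 2 ≤ r) (hreg : G.IsRegularOfDegree r)
    (A B : Finset V) (hdisj : Disjoint A B)
    (hA : A.card + k = r) (hB : B.card = k + 2)
    (hAind : ∀ a ∈ A, ∀ a' ∈ A, ¬ G.Adj a a')
    (hBind : ∀ b ∈ B, ∀ b' ∈ B, ¬ G.Adj b b')
    (hjoin : ∀ a ∈ A, ∀ b ∈ B, G.Adj a b)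
    (c : V → ℕ) (hc : IsGrundyColoring G c) :
    ∀ v ∈ A ∪ B, c v ≠ r + 1 :=
  kkplus2_no_color_r_plus_one_general G r k hk hreg A B hA hB hjoin c hc
end
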